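/- Let X be a finite ultrametric space with positive additive measure ν, with balls forming tree S with maximal ball K, and T : S \ S_min → ℝ. The diagonal matrix element of the sup-operator (Tf)(x) = Σ_y T(sup(x,y))(f(x) − f(y))ν(y) in the basis {χ_I/√ν(I)} at a point I equals Σ_{L : I < L ≤ K} (ν(L) − ν(L−1,I))·T(L), i.e. ⟨χ_I/√ν(I), T(χ_I/√ν(I))⟩ = Σ_{L : I < L ≤ K} (ν(L) − ν(L−1,I))·T(L). -/
import Mathlib


open scoped Classical
open Finset

noncomputable section

variable {X : Type*} [Fintype X] [DecidableEq X]

/-- `d` is an ultrametric on the finite space `X`. -/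
def IsUltra (d : X → X → ℝ) : Prop :=
  (∀ x y, 0 ≤ d x y) ∧ (∀ x y, d x y = 0 ↔ x = y) ∧ (∀ x y, d x y = d y x) ∧
    (∀ x y z, d x y ≤ max (d x z) (d z y))

/-- `B` is a ball of the ultrametric space `(X, d)`. -/
def IsBall (d : X → X → ℝ) (B : Finset X) : Prop :=
  ∃ x r, 0 ≤ r ∧ B = Finset.univ.filter (fun y => d x y ≤ r)

/-- `C` is a maximal proper subball of the ball `B`. -/
def MaxSub (d : X → X → ℝ) (B C : Finset X) : Prop :=
  IsBall d C ∧ C ⊂ B ∧ ∀ D, IsBall d D → C ⊆ D → D ⊂ B → D = C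

/-- The measure of a set: sum of the point masses `m`. -/
def nu (m : X → ℝ) (B : Finset X) : ℝ := ∑ x ∈ B, m x

/-- `Δν²(B) = ν(B)² - ∑_j ν(B_j)²` over the maximal proper subballs of `B`. -/
def dnu2 (d : X → X → ℝ) (m : X → ℝ) (B : Finset X) : ℝ :=
  nu m B ^ 2 - ∑ C ∈ Finset.univ.filter (MaxSub d B), nu m C ^ 2

/-- `Δν³(B) = ν(B)³ - ∑_j ν(B_j)³` over the maximal proper subballs of `B`. -/
def dnu3 (d : X → X → ℝ) (m : X → ℝ) (B : Finset X) : ℝ :=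
  nu m B ^ 3 - ∑ C ∈ Finset.univ.filter (MaxSub d B), nu m C ^ 3

/-- `sb x y` is the minimal ball containing the two points `x`, `y`. -/
def SupSpec (d : X → X → ℝ) (sb : X → X → Finset X) : Prop :=
  ∀ x y, IsBall d (sb x y) ∧ x ∈ sb x y ∧ y ∈ sb x y ∧
    ∀ B, IsBall d B → x ∈ B → y ∈ B → sb x y ⊆ B

/-- `pr L A` is the maximal proper subball of `L` containing the subball `A` (the
ball denoted `(L-1, A)` in the paper). -/
def PredSpec (d : X → X → ℝ) (pr : Finset X → Finset X → Finset X) : Prop :=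
  ∀ L A, IsBall d L → IsBall d A → A ⊂ L → MaxSub d L (pr L A) ∧ A ⊆ pr L A

lemma ball_nested {X : Type*} [Fintype X] [DecidableEq X] {d : X → X → ℝ}
    (hd : IsUltra d) {B C : Finset X}
    (hB : IsBall d B) (hC : IsBall d C) {z : X} (hzB : z ∈ B) (hzC : z ∈ C) :
    B ⊆ C ∨ C ⊆ B := by
  obtain ⟨hnn, heq, hsym, hmax⟩ := hd
  obtain ⟨x, r, hr, rfl⟩ := hB
  obtain ⟨x', r', hr', rfl⟩ := hC
  simp only [Finset.mem_filter, Finset.mem_univ, true_and] at hzB hzC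
  rcases le_total r r' with h | h
  · left
    intro w hw
    simp only [Finset.mem_filter, Finset.mem_univ, true_and] at hw ⊢
    calc d x' w ≤ max (d x' z) (d z w) := hmax _ _ _
      _ ≤ r' := max_le hzC <| le_trans (hmax z w x) <|
          max_le (le_trans (by rw [hsym]; exact hzB) h) (le_trans hw h)
  · right
    intro w hw
    simp only [Finset.mem_filter, Finset.mem_univ, true_and] at hw ⊢
    calc d x w ≤ max (d x z) (d z w) := hmax _ _ _
      _ ≤ r := max_le hzB <| le_trans (hmax z w x') <|
          max_le (le_trans (by rw [hsym]; exact hzC) h) (le_trans hw h)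

lemma singleton_ball {X : Type*} [Fintype X] [DecidableEq X] {d : X → X → ℝ}
    (hd : IsUltra d) (I : X) : IsBall d ({I} : Finset X) := by
  obtain ⟨hnn, heq, hsym, hmax⟩ := hd
  refine ⟨I, 0, le_refl _, ?_⟩
  ext y
  simp only [Finset.mem_singleton, Finset.mem_filter, Finset.mem_univ, true_and]
  constructor
  · intro h; subst h; exact le_of_eq ((heq y y).mpr rfl)
  · intro h; exact ((heq I y).mp (le_antisymm h (hnn I y))).symm

/-- Diagonal matrix element of the sup-operator in the orthonormal basis
`{χ_I / √ν(I)}` equals `∑_{I < L ≤ K} (ν(L) - ν(L-1,I)) T(L)`. -/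
theorem sup_operator_diag_matrix_element (d : X → X → ℝ) (m : X → ℝ)
    (sb : X → X → Finset X) (pr : Finset X → Finset X → Finset X) (T : Finset X → ℝ)
    (hd : IsUltra d) (hm : ∀ x, 0 < m x) (hsb : SupSpec d sb) (hpr : PredSpec d pr)
    (I : X) :
    ∑ x : X, ((if x = I then (1 : ℝ) else 0) / Real.sqrt (m I)) *
        (∑ y : X, T (sb x y) *
          ((if x = I then (1 : ℝ) else 0) / Real.sqrt (m I)
            - (if y = I then (1 : ℝ) else 0) / Real.sqrt (m I)) * m y) * m x
      = ∑ L ∈ Finset.univ.filter (fun L : Finset X => IsBall d L ∧ ({I} : Finset X) ⊂ L),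
          (nu m L - nu m (pr L {I})) * T L := by

  obtain ⟨hnn, heq, hsym, hmax⟩ := hd
  have hsI : (0:ℝ) < Real.sqrt (m I) := Real.sqrt_pos.mpr (hm I)
  have hIball : IsBall d ({I} : Finset X) := singleton_ball ⟨hnn, heq, hsym, hmax⟩ I
  -- reduce LHS
  rw [Finset.sum_eq_single I (fun x _ hx => by simp [hx]) (by simp), if_pos rfl]
  have key : ∀ L ∈ Finset.univ.filter
      (fun L : Finset X => IsBall d L ∧ ({I} : Finset X) ⊂ L),
      Finset.univ.filter (fun y => y ≠ I ∧ sb I y = L) = L \ pr L {I} := by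
    intro L hL
    simp only [Finset.mem_filter, Finset.mem_univ, true_and] at hL
    obtain ⟨hLb, hIL⟩ := hL
    obtain ⟨⟨hPb, hPsub, hPmax⟩, hIP⟩ := hpr L {I} hLb hIball hIL
    have hIinP : I ∈ pr L {I} := hIP (Finset.mem_singleton_self I)
    have hIinL : I ∈ L := hIL.1 (Finset.mem_singleton_self I)
    ext y
    simp only [Finset.mem_filter, Finset.mem_univ, true_and, Finset.mem_sdiff]
    constructor
    · rintro ⟨hyI, rfl⟩
      obtain ⟨hsbb, hxin, hyin, hmin⟩ := hsb I y
      refine ⟨hyin, fun hyP => ?_⟩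
      exact hPsub.2 (hmin _ hPb hIinP hyP)
    · rintro ⟨hyL, hyP⟩
      obtain ⟨hsbb, hxin, hyin, hmin⟩ := hsb I y
      have hyI : y ≠ I := fun h => hyP (h ▸ hIinP)
      refine ⟨hyI, ?_⟩
      have hsubL : sb I y ⊆ L := hmin _ hLb hIinL hyL
      by_contra hne
      have hslt : sb I y ⊂ L := ⟨hsubL, fun h => hne (Finset.Subset.antisymm hsubL h)⟩
      obtain ⟨⟨hQb, hQsub, hQmax⟩, hsQ⟩ := hpr L (sb I y) hLb hsbb hslt
      have hIQ : I ∈ pr L (sb I y) := hsQ hxin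
      have hPQ : pr L {I} = pr L (sb I y) := by
        rcases ball_nested ⟨hnn, heq, hsym, hmax⟩ hPb hQb hIinP hIQ with h | h
        · exact (hPmax _ hQb h hQsub).symm
        · exact hQmax _ hPb h hPsub
      exact hyP (hPQ ▸ hsQ hyin)
  -- rewrite RHS via fibers
  have hmaps : ∀ y ∈ Finset.univ.filter (fun y => y ≠ I),
      sb I y ∈ Finset.univ.filter
        (fun L : Finset X => IsBall d L ∧ ({I} : Finset X) ⊂ L) := by
    intro y hy
    simp only [Finset.mem_filter, Finset.mem_univ, true_and] at hy ⊢
    obtain ⟨hsbb, hxin, hyin, hmin⟩ := hsb I y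
    refine ⟨hsbb, Finset.singleton_subset_iff.mpr hxin, fun hsub => ?_⟩
    exact hy (Finset.mem_singleton.mp (hsub hyin))
  have hfib := Finset.sum_fiberwise_of_maps_to hmaps (fun y => T (sb I y) * m y)
  have hRHS : ∑ L ∈ Finset.univ.filter
      (fun L : Finset X => IsBall d L ∧ ({I} : Finset X) ⊂ L),
      (nu m L - nu m (pr L {I})) * T L
      = ∑ y ∈ Finset.univ.filter (fun y => y ≠ I), T (sb I y) * m y := by
    rw [← hfib]
    refine Finset.sum_congr rfl fun L hL => ?_
    have hfilter : (Finset.univ.filter (fun y => y ≠ I)).filter (fun y => sb I y = L)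
        = L \ pr L {I} := by
      rw [Finset.filter_filter]; exact key L hL
    rw [hfilter]
    simp only [Finset.mem_filter, Finset.mem_univ, true_and] at hL
    obtain ⟨hLb, hIL⟩ := hL
    obtain ⟨⟨hPb, hPsub, hPmax⟩, hIP⟩ := hpr L {I} hLb hIball hIL
    have hsub : pr L {I} ⊆ L := hPsub.1
    have hsd : ∑ y ∈ L \ pr L {I}, m y = nu m L - nu m (pr L {I}) := by
      rw [nu, nu, eq_sub_iff_add_eq, Finset.sum_sdiff hsub]
    have : ∀ y ∈ L \ pr L {I}, T (sb I y) * m y = T L * m y := by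
      intro y hy
      have : sb I y = L := by
        have := key L (by simp [hLb, hIL])
        have hy' : y ∈ Finset.univ.filter (fun y => y ≠ I ∧ sb I y = L) := this ▸ hy
        simp only [Finset.mem_filter] at hy'
        exact hy'.2.2
      rw [this]
    rw [Finset.sum_congr rfl this, ← Finset.mul_sum, hsd, mul_comm]
  rw [hRHS]
  -- now simplify the LHS expression
  have hLHS : ∀ y : X, T (sb I y) *
      (1 / Real.sqrt (m I) - (if y = I then (1:ℝ) else 0) / Real.sqrt (m I)) * m y
      = (if y ≠ I then T (sb I y) * m y else 0) / Real.sqrt (m I) := by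
    intro y
    by_cases h : y = I
    · simp [h]
    · simp [h]; ring
  rw [Finset.sum_congr rfl (fun y _ => hLHS y), ← Finset.sum_div, ← Finset.sum_filter,
    div_mul_div_comm, Real.mul_self_sqrt (hm I).le, one_mul,
    div_mul_cancel₀ _ (ne_of_gt (hm I))]
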